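/- arXiv:1206.4855 — 3 statements merged into one kernel-verified Lean document; each statement's English description precedes it below -/
import Mathlib

section
/- Let Q be an n×n real row-stochastic matrix, α ∈ (0,1), and X = (1-α)(I - αQ)^{-1}. Then X is strictly diagonally dominant of its column entries: for every column i and every k ≠ i, x_ii > |x_ki|; in particular the maximum entry of each column i of X is attained at the diagonal entry x_ii. -/
theorem pagerank_kernel_column_dominant (n : ℕ) (Q : Matrix (Fin n) (Fin n) ℝ)
    (hQ0 : ∀ i j, 0 ≤ Q i j) (hQ1 : ∀ i, ∑ j, Q i j = 1)
    (α : ℝ) (hα : α ∈ Set.Ioo (0 : ℝ) 1)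
    (X : Matrix (Fin n) (Fin n) ℝ)
    (hX : X = (1 - α) • ((1 : Matrix (Fin n) (Fin n) ℝ) - α • Q)⁻¹) :
    ∀ i k, k ≠ i → |X k i| < X i i := by
  obtain ⟨hα0, hα1⟩ := hα
  set M : Matrix (Fin n) (Fin n) ℝ := (1 : Matrix (Fin n) (Fin n) ℝ) - α • Q with hM
  -- the matrix M is nonsingular
  have hdet : M.det ≠ 0 := by
    intro hd
    obtain ⟨v, hv0, hv⟩ := (Matrix.exists_mulVec_eq_zero_iff).mpr hd
    obtain ⟨j0, hj0⟩ := Function.ne_iff.mp hv0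
    obtain ⟨k, -, hk⟩ := Finset.exists_max_image Finset.univ (fun j => |v j|)
      ⟨j0, Finset.mem_univ _⟩
    have hvk : v k = α * ∑ j, Q k j * v j := by
      have h := congrFun hv k
      have h2 : ∑ j, M k j * v j = 0 := by
        simpa [Matrix.mulVec, dotProduct] using h
      have h3 : ∀ j, M k j * v j = (if k = j then (1:ℝ) else 0) * v j - α * (Q k j * v j) := by
        intro j
        simp [hM, Matrix.sub_apply, Matrix.one_apply, sub_mul, mul_assoc]
      rw [Finset.sum_congr rfl (fun j _ => h3 j), Finset.sum_sub_distrib] at h2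
      simp only [ite_mul, one_mul, zero_mul, Finset.sum_ite_eq, Finset.mem_univ, if_true,
        ← Finset.mul_sum] at h2
      linarith
    have habs : |v k| ≤ α * |v k| := by
      calc |v k| = α * |∑ j, Q k j * v j| := by rw [hvk, abs_mul, abs_of_pos hα0]
        _ ≤ α * ∑ j, |Q k j * v j| :=
            mul_le_mul_of_nonneg_left (Finset.abs_sum_le_sum_abs _ _) hα0.le
        _ ≤ α * ∑ j, Q k j * |v k| := by
            apply mul_le_mul_of_nonneg_left _ hα0.le
            apply Finset.sum_le_sum
            intro j _
            rw [abs_mul, abs_of_nonneg (hQ0 k j)]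
            exact mul_le_mul_of_nonneg_left (hk j (Finset.mem_univ j)) (hQ0 k j)
        _ = α * |v k| := by rw [← Finset.sum_mul, hQ1, one_mul]
    have hvk0 : |v k| = 0 := by nlinarith [abs_nonneg (v k)]
    have := hk j0 (Finset.mem_univ j0)
    rw [hvk0] at this
    exact hj0 (by simpa using abs_nonpos_iff.mp this)
  set Y : Matrix (Fin n) (Fin n) ℝ := M⁻¹ with hY
  have hMY : M * Y = 1 := Matrix.mul_nonsing_inv M (isUnit_iff_ne_zero.mpr hdet)
  have key : ∀ i k, Y k i = (if k = i then (1:ℝ) else 0) + α * ∑ j, Q k j * Y j i := by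
    intro i k
    have h := congrFun (congrFun hMY k) i
    rw [Matrix.mul_apply] at h
    have h3 : ∀ j, M k j * Y j i = (if k = j then (1:ℝ) else 0) * Y j i - α * (Q k j * Y j i) := by
      intro j
      simp [hM, Matrix.sub_apply, Matrix.one_apply, sub_mul, mul_assoc]
    rw [Finset.sum_congr rfl (fun j _ => h3 j), Finset.sum_sub_distrib] at h
    simp only [ite_mul, one_mul, zero_mul, Finset.sum_ite_eq, Finset.mem_univ, if_true,
      ← Finset.mul_sum] at h
    rw [Matrix.one_apply] at h
    linarith
  intro i k hki
  -- nonnegativity of the column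
  have hmin : ∀ j, 0 ≤ Y j i := by
    obtain ⟨k0, -, hk0⟩ := Finset.exists_min_image Finset.univ (fun j => Y j i)
      ⟨i, Finset.mem_univ i⟩
    have hineq : Y k0 i ≤ ∑ j, Q k0 j * Y j i := by
      calc Y k0 i = ∑ j, Q k0 j * Y k0 i := by rw [← Finset.sum_mul, hQ1, one_mul]
        _ ≤ ∑ j, Q k0 j * Y j i :=
            Finset.sum_le_sum fun j _ =>
              mul_le_mul_of_nonneg_left (hk0 j (Finset.mem_univ j)) (hQ0 k0 j)
    have hα' : α * Y k0 i ≤ α * ∑ j, Q k0 j * Y j i :=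
      mul_le_mul_of_nonneg_left hineq hα0.le
    have h0 : 0 ≤ Y k0 i := by
      by_cases hc : k0 = i
      · have hkey := key i k0
        rw [if_pos hc] at hkey
        nlinarith
      · have hkey := key i k0
        rw [if_neg hc] at hkey
        nlinarith
    intro j
    exact le_trans h0 (hk0 j (Finset.mem_univ j))
  -- the diagonal entry is at least 1
  have hSnn : (0:ℝ) ≤ ∑ j, Q i j * Y j i :=
    Finset.sum_nonneg fun j _ => mul_nonneg (hQ0 i j) (hmin j)
  have hYii : 1 ≤ Y i i := by
    have hkey := key i i
    rw [if_pos rfl] at hkey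
    nlinarith
  -- the maximum of the column is at the diagonal
  obtain ⟨k0, -, hk0⟩ := Finset.exists_max_image Finset.univ (fun j => Y j i)
    ⟨i, Finset.mem_univ i⟩
  have hmax_le : Y k0 i ≤ Y i i := by
    by_cases hc : k0 = i
    · rw [hc]
    · exfalso
      have hineq : ∑ j, Q k0 j * Y j i ≤ Y k0 i := by
        calc ∑ j, Q k0 j * Y j i
            ≤ ∑ j, Q k0 j * Y k0 i :=
              Finset.sum_le_sum fun j _ =>
                mul_le_mul_of_nonneg_left (hk0 j (Finset.mem_univ j)) (hQ0 k0 j)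
          _ = Y k0 i := by rw [← Finset.sum_mul, hQ1, one_mul]
      have hkey := key i k0
      rw [if_neg hc] at hkey
      have := hk0 i (Finset.mem_univ i)
      nlinarith
  -- the off-diagonal entry is small
  have hk_small : Y k i ≤ α * Y i i := by
    have hineq : ∑ j, Q k j * Y j i ≤ Y i i := by
      calc ∑ j, Q k j * Y j i
          ≤ ∑ j, Q k j * Y k0 i :=
            Finset.sum_le_sum fun j _ =>
              mul_le_mul_of_nonneg_left (hk0 j (Finset.mem_univ j)) (hQ0 k j)
        _ = Y k0 i := by rw [← Finset.sum_mul, hQ1, one_mul]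
        _ ≤ Y i i := hmax_le
    have hkey := key i k
    rw [if_neg hki] at hkey
    nlinarith
  have hXk : X k i = (1 - α) * Y k i := by rw [hX]; simp [Matrix.smul_apply]
  have hXi : X i i = (1 - α) * Y i i := by rw [hX]; simp [Matrix.smul_apply]
  rw [hXk, hXi, abs_of_nonneg (mul_nonneg (by linarith) (hmin k))]
  have : Y k i < Y i i := lt_of_le_of_lt hk_small (by nlinarith)
  exact mul_lt_mul_of_pos_left this (by linarith)
end

section
/- Let Q be an n×n real row-stochastic matrix (n ≥ 2), α ∈ (0,1), X = (1-α)(I - αQ)^{-1}, and fix a node i. Then for every real number t with min_j x_ji < t < x_ii there exists a vector v ∈ ℝ^n with v > 0 and v^T e = 1 such that the i-th component of v^T X equals t. Hence the set of attainable personalized PageRank values of node i is exactly the open interval (min_j x_ji, x_ii). -/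
theorem pagerank_values_attained (n : ℕ) [NeZero n] (hn : 2 ≤ n)
    (Q : Matrix (Fin n) (Fin n) ℝ)
    (hQ0 : ∀ i j, 0 ≤ Q i j) (hQ1 : ∀ i, ∑ j, Q i j = 1)
    (α : ℝ) (hα : α ∈ Set.Ioo (0 : ℝ) 1)
    (X : Matrix (Fin n) (Fin n) ℝ)
    (hX : X = (1 - α) • ((1 : Matrix (Fin n) (Fin n) ℝ) - α • Q)⁻¹)
    (i : Fin n) (t : ℝ)
    (ht1 : Finset.univ.inf' Finset.univ_nonempty (fun j => X j i) < t)
    (ht2 : t < X i i) :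
    ∃ v : Fin n → ℝ, (∀ j, 0 < v j) ∧ (∑ j, v j = 1) ∧ ∑ j, v j * X j i = t := by
  classical
  set f : Fin n → ℝ := fun j => X j i with hf
  obtain ⟨j0, -, hj0⟩ := Finset.exists_mem_eq_inf' Finset.univ_nonempty f
  set m : ℝ := Finset.univ.inf' Finset.univ_nonempty f with hm
  have hmt : m < t := ht1
  have htf : t < f i := ht2
  have hnpos : (0:ℝ) < n := by
    have : (0:ℕ) < n := by omega
    exact_mod_cast this
  set a : ℝ := (∑ j, f j) / n with ha
  have hma : m ≤ a := by
    have hsum : (n : ℝ) * m ≤ ∑ j, f j := by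
      calc (n : ℝ) * m = ∑ _j : Fin n, m := by
            simp [Finset.sum_const, Finset.card_univ, mul_comm]
        _ ≤ ∑ j, f j := Finset.sum_le_sum fun j _ => Finset.inf'_le _ (Finset.mem_univ j)
    rw [ha, le_div_iff₀ hnpos]
    linarith
  set c1 : ℝ := a - m + 1 with hc1def
  set c2 : ℝ := |f i - a| + 1 with hc2def
  have hc1 : 0 < c1 := by rw [hc1def]; linarith
  have hc2 : 0 < c2 := by rw [hc2def]; positivity
  set ε : ℝ := min (1/2) (min ((t - m)/c1) ((f i - t)/c2)) with hε
  have hε0 : 0 < ε :=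
    lt_min (by norm_num) (lt_min (div_pos (by linarith) hc1) (div_pos (by linarith) hc2))
  have hεhalf : ε ≤ 1/2 := min_le_left _ _
  have h1 : ε * c1 ≤ t - m := by
    have h' : ε ≤ (t - m)/c1 := le_trans (min_le_right _ _) (min_le_left _ _)
    calc ε * c1 ≤ ((t - m)/c1) * c1 := by nlinarith
      _ = t - m := by field_simp
  have h2 : ε * c2 ≤ f i - t := by
    have h' : ε ≤ (f i - t)/c2 := le_trans (min_le_right _ _) (min_le_right _ _)
    calc ε * c2 ≤ ((f i - t)/c2) * c2 := by nlinarith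
      _ = f i - t := by field_simp
  have hfim : 0 < f i - m := by linarith
  have hγnum : 0 < t - ε * a - (1 - ε) * m := by nlinarith [hc1def, hε0]
  set γ : ℝ := (t - ε * a - (1 - ε) * m) / (f i - m) with hγdef
  have hγ : 0 < γ := div_pos hγnum hfim
  set β : ℝ := (1 - ε) - γ with hβdef
  have habs : ε * (f i - a) ≤ ε * |f i - a| :=
    mul_le_mul_of_nonneg_left (le_abs_self _) hε0.le
  have hβ : 0 ≤ β := by
    rw [hβdef, sub_nonneg, hγdef, div_le_iff₀ hfim]
    nlinarith
  refine ⟨fun j => ε / n + (if j = j0 then β else 0) + (if j = i then γ else 0), ?_, ?_, ?_⟩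
  · intro j
    have h0 : 0 < ε / n := div_pos hε0 hnpos
    dsimp only
    split_ifs <;> linarith
  · dsimp only
    rw [Finset.sum_add_distrib, Finset.sum_add_distrib]
    rw [Finset.sum_ite_eq' Finset.univ j0, Finset.sum_ite_eq' Finset.univ i]
    simp only [Finset.mem_univ, if_true, Finset.sum_const, Finset.card_univ,
      Fintype.card_fin, nsmul_eq_mul]
    have hne : (n:ℝ) ≠ 0 := ne_of_gt hnpos
    field_simp
    ring
  · have hval : ∀ j, (ε / n + (if j = j0 then β else 0) + (if j = i then γ else 0)) * X j i
        = ε / n * f j + (if j = j0 then β * f j else 0) + (if j = i then γ * f j else 0) := by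
      intro j
      show _ = ε / n * X j i + (if j = j0 then β * X j i else 0) + (if j = i then γ * X j i else 0)
      split_ifs <;> ring
    rw [Finset.sum_congr rfl fun j _ => hval j]
    rw [Finset.sum_add_distrib, Finset.sum_add_distrib]
    rw [Finset.sum_ite_eq' Finset.univ j0, Finset.sum_ite_eq' Finset.univ i]
    simp only [Finset.mem_univ, if_true]
    have hsum1 : ∑ j, ε / n * f j = ε * a := by
      rw [← Finset.mul_sum, ha]; ring
    rw [hsum1, ← hj0]
    have hγm : γ * (f i - m) = t - ε * a - (1 - ε) * m := by
      rw [hγdef]; field_simp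
    rw [hβdef]
    linear_combination hγm
end

section
/- Let X be an n×n real matrix and i an index. Suppose there exists j such that x_ji > x_jk for all k ≠ i. Then there exists a vector v ∈ ℝ^n with v > 0 and v^T e = 1 such that (v^T X)_i > (v^T X)_k for every k ≠ i (i.e., node i is a leader). -/
/-! Row `j` of `X` is `e_jᵀ X`, which has a strict maximum at `i`. Moving `e_j` a little towards
the uniform vector gives a positive probability vector `v`, and since a strict maximum over finitely
many coordinates is an open condition, `vᵀ X` still has its strict maximum at `i`. -/

open Filter Topology Matrix

theorem Filter.Tendsto.eventually_forall_ne_lt {ι α γ : Type*} [Finite ι] [LinearOrder α]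
    [TopologicalSpace α] [OrderClosedTopology α] {l : Filter γ} {f : γ → ι → α} {y : ι → α}
    (hf : Tendsto f l (𝓝 y)) {i : ι} (hy : ∀ k, k ≠ i → y k < y i) :
    ∀ᶠ x in l, ∀ k, k ≠ i → f x k < f x i := by
  refine eventually_all.2 fun k => ?_
  by_cases hk : k = i
  · exact .of_forall fun _ h => absurd hk h
  · exact ((tendsto_pi_nhds.1 hf k).eventually_lt (tendsto_pi_nhds.1 hf i) (hy k hk)).mono
      fun _ h _ => h

theorem Matrix.exists_pos_sum_eq_one_vecMul_lt_of_row_lt {m n : Type*} [Fintype m] [Finite n]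
    [DecidableEq m] (X : Matrix m n ℝ) {i : n} {j : m} (hj : ∀ k, k ≠ i → X j k < X j i) :
    ∃ v : m → ℝ, (∀ p, 0 < v p) ∧ ∑ p, v p = 1 ∧ ∀ k, k ≠ i → (v ᵥ* X) k < (v ᵥ* X) i := by
  have hcard : (0 : ℝ) < Fintype.card m := by exact_mod_cast Fintype.card_pos_iff.2 ⟨j⟩
  set u : m → ℝ := fun _ => (Fintype.card m : ℝ)⁻¹
  have hu_sum : ∑ p, u p = 1 := by simp [u, hcard.ne']
  set v : ℝ → m → ℝ := fun t => (1 - t) • Pi.single j 1 + t • u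
  have hv : Tendsto (fun t => v t ᵥ* X) (𝓝[>] 0) (𝓝 (X.row j)) := by
    have : Continuous fun t => v t ᵥ* X :=
      (by fun_prop : Continuous v).matrix_vecMul continuous_const
    simpa [v, single_one_vecMul] using (this.tendsto 0).mono_left nhdsWithin_le_nhds
  obtain ⟨t, hlead, ht0, ht1⟩ :=
    ((hv.eventually_forall_ne_lt hj).and (Ioo_mem_nhdsGT one_pos)).exists
  refine ⟨v t, fun p => ?_, ?_, hlead⟩
  · have hsingle : 0 ≤ (Pi.single j 1 : m → ℝ) p :=
      (Pi.single_nonneg.2 zero_le_one : (0 : m → ℝ) ≤ Pi.single j 1) p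
    have hu : 0 < u p := inv_pos.2 hcard
    simp only [v, Pi.add_apply, Pi.smul_apply, smul_eq_mul]
    exact add_pos_of_nonneg_of_pos (mul_nonneg (sub_nonneg.2 ht1.le) hsingle) (mul_pos ht0 hu)
  · simp [v, Finset.sum_add_distrib, ← Finset.mul_sum, hu_sum]

theorem leader_of_row_max (n : ℕ) (X : Matrix (Fin n) (Fin n) ℝ)
    (i : Fin n) (j : Fin n) (hj : ∀ k, k ≠ i → X j k < X j i) :
    ∃ v : Fin n → ℝ, (∀ p, 0 < v p) ∧ (∑ p, v p = 1) ∧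
      ∀ k, k ≠ i → ∑ p, v p * X p k < ∑ p, v p * X p i :=
  X.exists_pos_sum_eq_one_vecMul_lt_of_row_lt hj
end
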